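/- Let A = (Q, E, s, F) be a Wheeler r-GNFA, let ≤ be a Wheeler order on A, and let α ∈ Σ* with α ≠ ε. Let h* be defined as in the context. If h* > |G^≺(α)|, then |G^≺_⊣(α)| ≥ h* > |G^≺(α)|, and |G^≺_⊣(α)| is the smallest integer t with h* ≤ t ≤ |Q| such that, if t < |Q|, then A_min[t+1] = t+1. -/

import Mathlib

/-- Strict co-lexicographic order: `α ≺ β` iff `α.reverse` is lexicographically
smaller than `β.reverse`. The empty string is the minimum. -/
def ColexLt {σ : Type*} [LinearOrder σ] (α β : List σ) : Prop :=
  List.Lex (· < ·) α.reverse β.reverse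

/-- Non-strict co-lexicographic order `α ≼ β`. -/
def ColexLe {σ : Type*} [LinearOrder σ] (α β : List σ) : Prop :=
  ColexLt α β ∨ α = β

/-- `α` is a strict suffix of `β`. -/
def IsStrictSuffix {σ : Type*} (α β : List σ) : Prop :=
  α <:+ β ∧ α ≠ β

/-- `p(α, k)`: the prefix of `α` of length `k`. -/
def pref {σ : Type*} (α : List σ) (k : ℕ) : List σ := α.take k

/-- `s(α, k)`: the suffix of `α` of length `k`. -/
def suff {σ : Type*} (α : List σ) (k : ℕ) : List σ := α.drop (α.length - k)

/-- The 1-based rank of a state in a finite linear order: `rankQ u = i` means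
`u = Q[i]` in the enumeration `Q[1] < Q[2] < ⋯ < Q[|Q|]`. -/
noncomputable def rankQ {Q : Type*} [Fintype Q] [LinearOrder Q] (u : Q) : ℕ :=
  {v : Q | v ≤ u}.ncard

/-- `Q[i, j] = {Q[i], …, Q[j]}` (empty if `i > j`). -/
def Qiv (Q : Type*) [Fintype Q] [LinearOrder Q] (i j : ℕ) : Set Q :=
  {u | i ≤ rankQ u ∧ rankQ u ≤ j}

/-- A generalized nondeterministic finite automaton: a finite set of
string-labeled edges `E ⊆ Q × Q × Σ*`, an initial state `s`, final states `F`. -/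
structure GNFA (σ Q : Type*) where
  E : Finset (Q × Q × List σ)
  s : Q
  F : Finset Q

namespace GNFA

variable {σ Q : Type*}

/-- `I A u β` means `β ∈ I_u`: `β` is obtained by concatenating the edge labels
along some path from `s` to `u` (in particular `ε ∈ I_s`). -/
inductive I (A : GNFA σ Q) : Q → List σ → Prop
  | base : I A A.s []
  | step {u v : Q} {α ρ : List σ} : I A u α → (u, v, ρ) ∈ A.E → I A v (α ++ ρ)

/-- Reachability along edges. -/
def Reach (A : GNFA σ Q) : Q → Q → Prop :=
  Relation.ReflTransGen (fun x y => ∃ ρ, (x, y, ρ) ∈ A.E)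

/-- Every state is reachable from the initial state and is co-reachable
(final or allows reaching a final state). -/
def Standard (A : GNFA σ Q) : Prop :=
  (∀ u, A.Reach A.s u) ∧ ∀ u, ∃ f ∈ A.F, A.Reach u f

/-- An ε-walk from `u` to `v`: a (possibly empty) sequence of ε-labeled edges. -/
def EpsWalk (A : GNFA σ Q) : Q → Q → Prop :=
  Relation.ReflTransGen (fun x y => (x, y, ([] : List σ)) ∈ A.E)

/-- An `r`-GNFA: all edge labels have length at most `r`. -/
def Bounded (A : GNFA σ Q) (r : ℕ) : Prop := ∀ e ∈ A.E, e.2.2.length ≤ r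

/-- A GNFA without ε-transitions: every edge label is nonempty. -/
def NoEps (A : GNFA σ Q) : Prop := ∀ e ∈ A.E, e.2.2 ≠ []

/-- `λ(u)`: the set of strings labeling some edge entering `u`. -/
def lab (A : GNFA σ Q) (u : Q) : Set (List σ) := {ρ | ∃ u', (u', u, ρ) ∈ A.E}

/-- `G_⊣(α)`: states `u` such that some `β ∈ I_u` has `α` as a suffix. -/
def Gsuf (A : GNFA σ Q) (α : List σ) : Set Q := {u | ∃ β, I A u β ∧ α <:+ β}

/-- `G*(α)`: states reached by an edge whose label has `α` as a suffix. -/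
def Gstar (A : GNFA σ Q) (α : List σ) : Set Q := {u | ∃ ρ ∈ A.lab u, α <:+ ρ}

section Colex
variable [LinearOrder σ]

/-- The preorder `u ≼_A v`. -/
def Preceq (A : GNFA σ Q) (u v : Q) : Prop :=
  ∀ α β, I A u α → I A v β →
    ¬((I A u α ∧ I A v α) ∧ (I A u β ∧ I A v β)) → ColexLt α β

/-- `G^≺(α)`: states `u` such that every `β ∈ I_u` satisfies `β ≺ α`. -/
def Gprec (A : GNFA σ Q) (α : List σ) : Set Q := {u | ∀ β, I A u β → ColexLt β α}

/-- `G^≺_⊣(α) = G^≺(α) ∪ G_⊣(α)`. -/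
def GprecSuf (A : GNFA σ Q) (α : List σ) : Set Q := A.Gprec α ∪ A.Gsuf α

/-- The linear order on `Q` is a Wheeler order on `A` (Axioms 1–4). -/
def IsWheeler [LinearOrder Q] (A : GNFA σ Q) : Prop :=
  (∀ u v : Q, u ≤ v → A.Preceq u v) ∧
  (∀ u : Q, A.s ≤ u) ∧
  (∀ u' u v' v : Q, ∀ ρ ρ' : List σ, (u', u, ρ) ∈ A.E → (v', v, ρ') ∈ A.E →
      u < v → ¬IsStrictSuffix ρ' ρ → ColexLe ρ ρ') ∧
  (∀ u' u v' v : Q, ∀ ρ : List σ, (u', u, ρ) ∈ A.E → (v', v, ρ) ∈ A.E →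
      u < v → u' ≤ v')

end Colex

section Indexed
variable [Fintype Q] [LinearOrder Q]

/-- `out(Q[1, m], ρ)`: number of edges labeled `ρ` leaving states in `Q[1, m]`. -/
noncomputable def outC (A : GNFA σ Q) (m : ℕ) (ρ : List σ) : ℕ :=
  {e : Q × Q × List σ | e ∈ A.E ∧ rankQ e.1 ≤ m ∧ e.2.2 = ρ}.ncard

/-- `in(Q[1, m], ρ)`: number of edges labeled `ρ` entering states in `Q[1, m]`. -/
noncomputable def inC (A : GNFA σ Q) (m : ℕ) (ρ : List σ) : ℕ :=
  {e : Q × Q × List σ | e ∈ A.E ∧ rankQ e.2.1 ≤ m ∧ e.2.2 = ρ}.ncard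

/-- `A_max[i]`: the largest `j` such that there is an ε-walk from `Q[j]` to `Q[i]`. -/
noncomputable def Amax (A : GNFA σ Q) (i : ℕ) : ℕ :=
  sSup {j | ∃ u v : Q, rankQ u = i ∧ rankQ v = j ∧ A.EpsWalk v u}

/-- `A_min[i]`: the smallest `j` such that there is an ε-walk from `Q[j]` to `Q[i]`. -/
noncomputable def Amin (A : GNFA σ Q) (i : ℕ) : ℕ :=
  sInf {j | ∃ u v : Q, rankQ u = i ∧ rankQ v = j ∧ A.EpsWalk v u}

variable [LinearOrder σ]

/-- `f_k = out(Q[1, |G^≺(p(α, |α|−k))|], s(α, k))`. -/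
noncomputable def fk (A : GNFA σ Q) (α : List σ) (k : ℕ) : ℕ :=
  A.outC ((A.Gprec (pref α (α.length - k))).ncard) (suff α k)

/-- `g_k = out(Q[1, |G^≺_⊣(p(α, |α|−k))|], s(α, k))`. -/
noncomputable def gk (A : GNFA σ Q) (α : List σ) (k : ℕ) : ℕ :=
  A.outC ((A.GprecSuf (pref α (α.length - k))).ncard) (suff α k)

/-- The property defining `j*` in Lemmas 2 and 4 (largest `j` satisfying it):
(i) `in(Q[1, j], s(α, k)) ≤ f_k` for every `0 < k < min{r+1, |α|}`; and
(ii) `ρ ≺ α` for every `ρ ∈ Σ^k ∩ λ(Q[h])`, every `1 ≤ h ≤ j`, every `0 < k < r+1`. -/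
def Jcond (A : GNFA σ Q) (r : ℕ) (α : List σ) (j : ℕ) : Prop :=
  (∀ k, 0 < k → k < min (r + 1) α.length → A.inC j (suff α k) ≤ A.fk α k) ∧
  (∀ k, 0 < k → k < r + 1 → ∀ h, 1 ≤ h → h ≤ j → ∀ u : Q, rankQ u = h →
      ∀ ρ : List σ, ρ.length = k → ρ ∈ A.lab u → ColexLt ρ α)

/-- The property defining `i*` (largest `i ≤ |Q|` satisfying it):
if `i ≥ 1` then `Q[i] ∈ G*(α)`. -/
def Icond (A : GNFA σ Q) (α : List σ) (i : ℕ) : Prop :=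
  1 ≤ i → ∃ u : Q, rankQ u = i ∧ u ∈ A.Gstar α

/-- The property defining `j°` (smallest `j ≤ |Q|` satisfying it):
`in(Q[1, j], s(α, k)) ≥ g_k` for every `0 < k < min{r+1, |α|}` with `g_k > f_k`. -/
def Jcond2 (A : GNFA σ Q) (r : ℕ) (α : List σ) (j : ℕ) : Prop :=
  ∀ k, 0 < k → k < min (r + 1) α.length → A.fk α k < A.gk α k →
    A.gk α k ≤ A.inC j (suff α k)

end Indexed

end GNFA

/-!
For a Wheeler order, `G^≺(γ)` and `G^≺_⊣(γ)` are lower sets, so `G^≺_⊣(α) = Q[1, T]` with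
`T = |G^≺_⊣(α)|`. Axiom 4 shows that `T` satisfies the condition defining `j°`, and
`G*(α) ⊆ G_⊣(α)`, so `h* ≤ T`. When `h* > |G^≺(α)|` the set `G_⊣(α)` is nonempty, and then
Axiom 1 prevents ε-edges from leaving `Q[1, T]`, so `A_min[T + 1] = T + 1`. Conversely every state
of `G_⊣(α)` is ε-reachable from `Q[1, h*]`, so no `h* ≤ t < T` has `A_min[t + 1] = t + 1`.
-/

theorem List.IsPrefix.of_not_lex_of_lex {α : Type*} {r : α → α → Prop} {p x y : List α}
    (hpy : p <+: y) (hxp : ¬List.Lex r x p) (hxy : List.Lex r x y) : p <+: x := by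
  induction p generalizing x y with
  | nil => exact List.nil_prefix
  | cons a p ih =>
    obtain ⟨t, rfl⟩ := hpy
    cases x with
    | nil => exact absurd List.Lex.nil hxp
    | cons c x =>
      cases hxy with
      | rel hca => exact absurd (List.Lex.rel hca) hxp
      | cons hxy =>
        exact List.cons_prefix_cons.2
          ⟨rfl, ih (List.prefix_append p t) (fun h => hxp h.cons) hxy⟩

section Colex
variable {σ : Type*} [LinearOrder σ] {a b c : List σ}

theorem ColexLt.trans (hab : ColexLt a b) (hbc : ColexLt b c) : ColexLt a c :=
  List.lex_trans lt_trans hab hbc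

theorem not_colexLt_of_suffix (h : a <:+ b) : ¬ColexLt b a :=
  (List.reverse_prefix.2 h).le

/-- Strings having `a` as a suffix form a colex interval. -/
theorem suffix_of_not_colexLt_of_colexLt (hca : ¬ColexLt c a) (hcb : ColexLt c b) (hab : a <:+ b) :
    a <:+ c :=
  List.reverse_prefix.1 <| (List.reverse_prefix.2 hab).of_not_lex_of_lex hca hcb

end Colex

section Strings
variable {σ : Type*}

theorem pref_append_suff (α : List σ) (k : ℕ) : pref α (α.length - k) ++ suff α k = α :=
  List.take_append_drop _ _

theorem exists_suff_of_suffix_append {α β ρ : List σ} (hs : α <:+ β ++ ρ) (hn : ¬α <:+ ρ) :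
    ρ.length < α.length ∧ ρ = suff α ρ.length ∧ pref α (α.length - ρ.length) <:+ β := by
  obtain ⟨d, rfl⟩ :=
    (List.suffix_or_suffix_of_suffix (List.suffix_append β ρ) hs).resolve_right hn
  have hd : d ≠ [] := by rintro rfl; exact hn (List.suffix_refl ρ)
  have hpref : pref (d ++ ρ) ((d ++ ρ).length - ρ.length) = d := by simp [pref]
  refine ⟨by simpa using List.length_pos_iff.2 hd, by simp [suff], ?_⟩
  rw [hpref]
  obtain ⟨t, ht⟩ := hs
  exact ⟨t, List.append_cancel_right (by simpa using ht)⟩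

end Strings

section Rank
variable {Q : Type*} [Fintype Q] [LinearOrder Q]

theorem rankQ_strictMono : StrictMono (rankQ (Q := Q)) := fun u v huv =>
  Set.ncard_lt_ncard ((Set.ssubset_iff_of_subset fun _ hw => le_trans hw huv.le).2
    ⟨v, le_rfl, not_le.2 huv⟩)

theorem rankQ_lt_rankQ {u v : Q} : rankQ u < rankQ v ↔ u < v := rankQ_strictMono.lt_iff_lt

theorem rankQ_le_rankQ {u v : Q} : rankQ u ≤ rankQ v ↔ u ≤ v := rankQ_strictMono.le_iff_le

theorem rankQ_pos (u : Q) : 0 < rankQ u := (Set.ncard_pos).2 ⟨u, le_rfl⟩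

theorem rankQ_le_card (u : Q) : rankQ u ≤ Fintype.card Q :=
  (Set.ncard_le_card _).trans_eq Nat.card_eq_fintype_card

theorem exists_rankQ_eq {i : ℕ} (h₁ : 1 ≤ i) (h₂ : i ≤ Fintype.card Q) :
    ∃ u : Q, rankQ u = i := by
  classical
  have hsub : Finset.univ.image rankQ ⊆ Finset.Icc 1 (Fintype.card Q) := fun _ hi => by
    obtain ⟨u, -, rfl⟩ := Finset.mem_image.1 hi
    exact Finset.mem_Icc.2 ⟨rankQ_pos u, rankQ_le_card u⟩
  have himage := Finset.eq_of_subset_of_card_le hsub <| by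
    rw [Finset.card_image_of_injective _ rankQ_strictMono.injective]; simp
  have hi : i ∈ Finset.univ.image rankQ := himage ▸ Finset.mem_Icc.2 ⟨h₁, h₂⟩
  simpa using hi

theorem IsLowerSet.mem_iff_rankQ_le {S : Set Q} (hS : IsLowerSet S) {u : Q} :
    u ∈ S ↔ rankQ u ≤ S.ncard := by
  refine ⟨fun hu => Set.ncard_le_ncard fun v hv => hS hv hu, fun h => ?_⟩
  by_contra hu
  have hsub : S ⊆ {v | v < u} := fun v hv => lt_of_not_ge fun hle => hu (hS hle hv)
  have hins : {v : Q | v ≤ u} = insert u {v | v < u} := by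
    ext w; simp [le_iff_lt_or_eq, or_comm]
  have hrank : rankQ u = {v : Q | v < u}.ncard + 1 := by
    rw [rankQ, hins, Set.ncard_insert_of_notMem (by simp)]
  have := Set.ncard_le_ncard hsub
  omega

end Rank

theorem Set.exists_mem_notMem_of_ncard_le_of_mem_diff {α : Type*} {s t : Set α} {a : α}
    (h : s.ncard ≤ t.ncard) (hs : s.Finite) (has : a ∈ s) (hat : a ∉ t) : ∃ b ∈ t, b ∉ s := by
  obtain ⟨b, hbt, hb⟩ := Set.exists_mem_notMem_of_ncard_lt_ncard
    ((Set.ncard_sdiff_singleton_lt_of_mem has hs).trans_le h) hs.sdiff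
  exact ⟨b, hbt, fun hbs => hb ⟨hbs, fun hba => hat (hba ▸ hbt)⟩⟩

namespace GNFA
variable {σ Q : Type*} {A : GNFA σ Q}

theorem exists_I_of_reach {u : Q} (h : A.Reach A.s u) : ∃ β, A.I u β := by
  induction h with
  | refl => exact ⟨[], I.base⟩
  | tail _ he ih =>
    obtain ⟨β, hβ⟩ := ih
    obtain ⟨ρ, he⟩ := he
    exact ⟨β ++ ρ, hβ.step he⟩

theorem Standard.exists_I (hA : A.Standard) (u : Q) : ∃ β, A.I u β :=
  exists_I_of_reach (hA.1 u)

theorem I.eps_step {u v : Q} {β : List σ} (h : A.I u β) (he : (u, v, []) ∈ A.E) : A.I v β := by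
  simpa using h.step he

theorem mem_Gsuf_append_of_edge {γ ρ : List σ} {x w : Q} (hx : x ∈ A.Gsuf γ)
    (he : (x, w, ρ) ∈ A.E) : w ∈ A.Gsuf (γ ++ ρ) := by
  obtain ⟨β, hβ, hγβ⟩ := hx
  exact ⟨β ++ ρ, hβ.step he, List.suffix_append_self_iff.2 hγβ⟩

theorem finite_setOf_mem_E_and (P : Q × Q × List σ → Prop) : {e | e ∈ A.E ∧ P e}.Finite :=
  A.E.finite_toSet.subset fun _ he => he.1

theorem Gstar_subset_Gsuf (hA : A.Standard) (α : List σ) : A.Gstar α ⊆ A.Gsuf α := by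
  rintro u ⟨ρ, ⟨u', he⟩, hαρ⟩
  obtain ⟨β, hβ⟩ := hA.exists_I u'
  exact ⟨β ++ ρ, hβ.step he, hαρ.trans (List.suffix_append β ρ)⟩

section Colex
variable [LinearOrder σ]

theorem disjoint_Gprec_Gsuf (α : List σ) : Disjoint (A.Gprec α) (A.Gsuf α) :=
  Set.disjoint_left.2 fun _ hp ⟨β, hβ, hαβ⟩ => not_colexLt_of_suffix hαβ (hp β hβ)

variable [LinearOrder Q]

theorem isLowerSet_Gprec (hA : A.Standard) (hW : A.IsWheeler) (α : List σ) :
    IsLowerSet (A.Gprec α) := by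
  intro v u huv hv γ hγ
  by_cases hvγ : A.I v γ
  · exact hv γ hvγ
  obtain ⟨β, hβ⟩ := hA.exists_I v
  exact (hW.1 u v huv γ β hγ hβ fun h => hvγ h.1.2).trans (hv β hβ)

theorem isLowerSet_GprecSuf (hA : A.Standard) (hW : A.IsWheeler) (α : List σ) :
    IsLowerSet (A.GprecSuf α) := by
  rintro v u huv (hv | ⟨β, hβ, hαβ⟩)
  · exact Or.inl (isLowerSet_Gprec hA hW α huv hv)
  by_cases hu : u ∈ A.Gprec α
  · exact Or.inl hu
  obtain ⟨γ, hγ, hγα⟩ : ∃ γ, A.I u γ ∧ ¬ColexLt γ α := by simpa [Gprec] using hu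
  by_cases huβ : A.I u β
  · exact Or.inr ⟨β, huβ, hαβ⟩
  have hγβ : ColexLt γ β := hW.1 u v huv γ β hγ hβ fun h => huβ h.2.1
  exact Or.inr ⟨γ, hγ, suffix_of_not_colexLt_of_colexLt hγα hγβ hαβ⟩

/-- A string `δ ≺ α` carried out of `G^≺_⊣(α)` by an ε-edge would, by Axiom 1, exceed a string
with suffix `α`. -/
theorem mem_GprecSuf_of_eps_edge (hA : A.Standard) (hW : A.IsWheeler) {α : List σ}
    (hne : (A.Gsuf α).Nonempty) {a b : Q} (he : (a, b, []) ∈ A.E) (ha : a ∈ A.GprecSuf α) :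
    b ∈ A.GprecSuf α := by
  rcases ha with haP | ⟨β, hβ, hαβ⟩
  · by_contra hb
    obtain ⟨x, β, hβ, hαβ⟩ := hne
    have hxb : x < b := lt_of_not_ge fun hbx =>
      hb (isLowerSet_GprecSuf hA hW α hbx (Or.inr ⟨β, hβ, hαβ⟩))
    obtain ⟨δ, hδ⟩ := hA.exists_I a
    have hβδ : ColexLt β δ :=
      hW.1 x b hxb.le β δ hβ (hδ.eps_step he) fun h => hb (Or.inr ⟨β, h.1.2, hαβ⟩)
    exact not_colexLt_of_suffix hαβ (hβδ.trans (haP δ hδ))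
  · exact Or.inr ⟨β, hβ.eps_step he, hαβ⟩

theorem EpsWalk.mem_GprecSuf (hA : A.Standard) (hW : A.IsWheeler) {α : List σ}
    (hne : (A.Gsuf α).Nonempty) {u v : Q} (h : A.EpsWalk v u) (hv : v ∈ A.GprecSuf α) :
    u ∈ A.GprecSuf α := by
  induction h with
  | refl => exact hv
  | tail _ he ih => exact mem_GprecSuf_of_eps_edge hA hW hne he ih

end Colex

section Indexed
variable [Fintype Q] [LinearOrder Q]

theorem Amin_le {i : ℕ} {u v : Q} (hu : rankQ u = i) (h : A.EpsWalk v u) :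
    A.Amin i ≤ rankQ v :=
  Nat.sInf_le ⟨u, v, hu, rfl, h⟩

theorem Amin_eq_self {i : ℕ} {u : Q} (hu : rankQ u = i)
    (h : ∀ v, A.EpsWalk v u → i ≤ rankQ v) : A.Amin i = i := by
  refine le_antisymm ((Amin_le hu .refl).trans_eq hu) (le_csInf ⟨i, u, u, hu, hu, .refl⟩ ?_)
  rintro j ⟨u', v, hu', rfl, hvu'⟩
  obtain rfl : u' = u := rankQ_strictMono.injective (hu'.trans hu.symm)
  exact h v hvu'

theorem outC_lt_outC_of_edge {m m' : ℕ} {x w : Q} {ρ : List σ} (he : (x, w, ρ) ∈ A.E)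
    (hm' : m' < rankQ x) (hm : rankQ x ≤ m) : A.outC m' ρ < A.outC m ρ := by
  refine Set.ncard_lt_ncard ⟨fun e ⟨he, hem, hρ⟩ => ⟨he, by omega, hρ⟩, fun hsub => ?_⟩
    (finite_setOf_mem_E_and _)
  have : rankQ x ≤ m' := (hsub ⟨he, hm, rfl⟩).2.1
  omega

variable [LinearOrder σ]

/-- Otherwise counting yields a `ρ`-edge into `Q[1, j]` from outside `Q[1, m]`, and the two edges
would cross against Axiom 4. -/
theorem rankQ_le_of_outC_le_inC (hW : A.IsWheeler) {m j : ℕ} {x w : Q} {ρ : List σ}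
    (hj : A.outC m ρ ≤ A.inC j ρ) (he : (x, w, ρ) ∈ A.E) (hx : rankQ x ≤ m) :
    rankQ w ≤ j := by
  by_contra hwj
  obtain ⟨⟨y', y, ρ'⟩, ⟨he', hy, rfl⟩, hn⟩ :=
    Set.exists_mem_notMem_of_ncard_le_of_mem_diff
      (s := {e | e ∈ A.E ∧ rankQ e.1 ≤ m ∧ e.2.2 = ρ})
      (t := {e | e ∈ A.E ∧ rankQ e.2.1 ≤ j ∧ e.2.2 = ρ})
      hj (finite_setOf_mem_E_and _) ⟨he, hx, rfl⟩ fun h => hwj h.2.1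
  have hyw : y < w := rankQ_lt_rankQ.1 (by simp only at hy; omega)
  exact hn ⟨he', (rankQ_le_rankQ.2 (hW.2.2.2 y' y x w _ he' he hyw)).trans hx, rfl⟩

theorem rankQ_mem_Ioc_of_mem_Gsuf (hA : A.Standard) (hW : A.IsWheeler) {γ : List σ} {x : Q}
    (hx : x ∈ A.Gsuf γ) : rankQ x ∈ Set.Ioc (A.Gprec γ).ncard (A.GprecSuf γ).ncard :=
  ⟨lt_of_not_ge fun h => (disjoint_Gprec_Gsuf γ).notMem_of_mem_right hx
      ((isLowerSet_Gprec hA hW γ).mem_iff_rankQ_le.2 h),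
    (isLowerSet_GprecSuf hA hW γ).mem_iff_rankQ_le.1 (Or.inr hx)⟩

theorem exists_edge_of_outC_lt (hA : A.Standard) (hW : A.IsWheeler) {γ ρ : List σ}
    (h : A.outC (A.Gprec γ).ncard ρ < A.outC (A.GprecSuf γ).ncard ρ) :
    ∃ x w, (x, w, ρ) ∈ A.E ∧ x ∈ A.Gsuf γ ∧ x ∉ A.Gprec γ := by
  obtain ⟨⟨x, w, ρ'⟩, ⟨he, hx, rfl⟩, hn⟩ :=
    Set.exists_mem_notMem_of_ncard_lt_ncard h (finite_setOf_mem_E_and _)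
  have hxP : x ∉ A.Gprec γ := fun hxP =>
    hn ⟨he, (isLowerSet_Gprec hA hW γ).mem_iff_rankQ_le.1 hxP, rfl⟩
  exact ⟨x, w, he, ((isLowerSet_GprecSuf hA hW γ).mem_iff_rankQ_le.2 hx).resolve_left hxP, hxP⟩

/-- Axiom 4, applied against a `ρ`-edge leaving `G_⊣(γ) \ G^≺(γ)`, keeps the target of a `ρ`-edge
leaving `G^≺(γ)` below a state of `G_⊣(γρ)`. -/
theorem mem_GprecSuf_append_of_edge (hA : A.Standard) (hW : A.IsWheeler) {γ ρ : List σ}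
    (h : A.outC (A.Gprec γ).ncard ρ < A.outC (A.GprecSuf γ).ncard ρ) {x w : Q}
    (he : (x, w, ρ) ∈ A.E) (hx : x ∈ A.GprecSuf γ) : w ∈ A.GprecSuf (γ ++ ρ) := by
  obtain ⟨x₀, w₀, he₀, hx₀, hx₀P⟩ := exists_edge_of_outC_lt hA hW h
  rcases hx with hxP | hxS
  · refine isLowerSet_GprecSuf hA hW _ (le_of_not_gt fun hlt => ?_)
      (Or.inr (mem_Gsuf_append_of_edge hx₀ he₀))
    exact hx₀P (isLowerSet_Gprec hA hW γ (hW.2.2.2 x₀ w₀ x w ρ he₀ he hlt) hxP)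
  · exact Or.inr (mem_Gsuf_append_of_edge hxS he)

theorem outC_le_inC_of_outC_lt (hA : A.Standard) (hW : A.IsWheeler) {γ ρ : List σ}
    (h : A.outC (A.Gprec γ).ncard ρ < A.outC (A.GprecSuf γ).ncard ρ) :
    A.outC (A.GprecSuf γ).ncard ρ ≤ A.inC (A.GprecSuf (γ ++ ρ)).ncard ρ := by
  refine Set.ncard_le_ncard ?_ (finite_setOf_mem_E_and _)
  rintro ⟨x, w, ρ'⟩ ⟨he, hx, rfl⟩
  refine ⟨he, (isLowerSet_GprecSuf hA hW _).mem_iff_rankQ_le.1 ?_, rfl⟩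
  exact mem_GprecSuf_append_of_edge hA hW h he ((isLowerSet_GprecSuf hA hW γ).mem_iff_rankQ_le.2 hx)

theorem jcond2_ncard_GprecSuf (hA : A.Standard) (hW : A.IsWheeler) (r : ℕ) (α : List σ) :
    A.Jcond2 r α (A.GprecSuf α).ncard := by
  intro k _ _ hfg
  have := outC_le_inC_of_outC_lt hA hW hfg
  rwa [pref_append_suff] at this

/-- Walk back along a path spelling a string with suffix `α`: above `h`, the last edge can carry
neither all of `α` (by `hG`) nor a proper nonempty suffix `s(α, k)` of it (that edge is counted in
`g_k` but not in `f_k`, so `hj` puts its target in `Q[1, j]`); hence it is an ε-edge. -/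
theorem exists_epsWalk_rankQ_le (hA : A.Standard) (hW : A.IsWheeler) {r : ℕ}
    (hr : A.Bounded r) {α : List σ} (hα : α ≠ []) {h j : ℕ}
    (hG : ∀ w ∈ A.Gstar α, rankQ w ≤ h) (hj : A.Jcond2 r α j) (hjh : j ≤ h) {w : Q}
    (hw : w ∈ A.Gsuf α) : ∃ v, A.EpsWalk v w ∧ rankQ v ≤ h := by
  obtain ⟨β, hβ, hαβ⟩ := hw
  induction hβ with
  | base => exact absurd (List.suffix_nil.1 hαβ) hα
  | @step x w β ρ hβ he ih =>
    by_cases hwh : rankQ w ≤ h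
    · exact ⟨w, .refl, hwh⟩
    have hαρ : ¬α <:+ ρ := fun hαρ => hwh (hG w ⟨ρ, ⟨x, he⟩, hαρ⟩)
    by_cases hρ : ρ = []
    · subst hρ
      obtain ⟨v, hv, hvh⟩ := ih (by simpa using hαβ)
      exact ⟨v, hv.tail he, hvh⟩
    obtain ⟨hρα, hρ_eq, hpβ⟩ := exists_suff_of_suffix_append hαβ hαρ
    have hk : ρ.length < min (r + 1) α.length := lt_min (Nat.lt_succ_of_le (hr _ he)) hρα
    rw [hρ_eq] at he
    obtain ⟨hxP, hxPS⟩ := rankQ_mem_Ioc_of_mem_Gsuf hA hW ⟨β, hβ, hpβ⟩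
    have hfg : A.fk α ρ.length < A.gk α ρ.length := outC_lt_outC_of_edge he hxP hxPS
    have := rankQ_le_of_outC_le_inC hW (hj _ (List.length_pos_iff.2 hρ) hk hfg) he hxPS
    omega

end Indexed

end GNFA

theorem gprecsuf_card_eq_smallest_t_general {σ Q : Type*} [LinearOrder σ]
    [Fintype Q] [LinearOrder Q] (A : GNFA σ Q)
    (hA : A.Standard) (hW : A.IsWheeler) (r : ℕ) (hr : A.Bounded r)
    (α : List σ) (hα : α ≠ [])
    (istar : ℕ) (hi : A.Icond α istar)
    (hi_max : ∀ i ≤ Fintype.card Q, A.Icond α i → i ≤ istar)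
    (jo : ℕ) (hjo : A.Jcond2 r α jo)
    (hjo_min : ∀ j ≤ Fintype.card Q, A.Jcond2 r α j → jo ≤ j)
    (hstar : ℕ) (hh : hstar = max (max (A.Gprec α).ncard istar) jo)
    (hgt : (A.Gprec α).ncard < hstar) :
    hstar ≤ (A.GprecSuf α).ncard ∧ (A.Gprec α).ncard < (A.GprecSuf α).ncard ∧
    (A.GprecSuf α).ncard ≤ Fintype.card Q ∧
    ((A.GprecSuf α).ncard < Fintype.card Q →
      A.Amin ((A.GprecSuf α).ncard + 1) = (A.GprecSuf α).ncard + 1) ∧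
    ∀ t, hstar ≤ t → t ≤ Fintype.card Q →
      (t < Fintype.card Q → A.Amin (t + 1) = t + 1) →
      (A.GprecSuf α).ncard ≤ t := by
  have hP (u : Q) := (GNFA.isLowerSet_Gprec hA hW α).mem_iff_rankQ_le (u := u)
  have hPS (u : Q) := (GNFA.isLowerSet_GprecSuf hA hW α).mem_iff_rankQ_le (u := u)
  set T := (A.GprecSuf α).ncard
  have hTQ : T ≤ Fintype.card Q := (Set.ncard_le_card _).trans_eq Nat.card_eq_fintype_card
  have hiT : istar ≤ T := by
    rcases Nat.eq_zero_or_pos istar with h0 | hpos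
    · omega
    obtain ⟨u, rfl, hu⟩ := hi hpos
    exact (hPS _).1 (Or.inr (GNFA.Gstar_subset_Gsuf hA α hu))
  have hsT : hstar ≤ T := hh ▸ max_le (max_le (Set.ncard_le_ncard Set.subset_union_left) hiT)
    (hjo_min T hTQ (GNFA.jcond2_ncard_GprecSuf hA hW r α))
  have hne : (A.Gsuf α).Nonempty := by
    rw [Set.nonempty_iff_ne_empty]
    rintro h
    simp only [T, GNFA.GprecSuf, h, Set.union_empty] at hsT
    omega
  refine ⟨hsT, hgt.trans_le hsT, hTQ, fun hTQ' => ?_, fun t hst htQ hAmin => ?_⟩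
  · obtain ⟨u, hu⟩ := exists_rankQ_eq (i := T + 1) (by omega) hTQ'
    refine GNFA.Amin_eq_self hu fun v hvu => le_of_not_gt fun hv => ?_
    have := (hPS _).1 (GNFA.EpsWalk.mem_GprecSuf hA hW hne hvu ((hPS _).2 (by omega)))
    omega
  · by_contra! htT
    obtain ⟨u, hu⟩ := exists_rankQ_eq (Q := Q) (i := t + 1) (by omega) (by omega)
    have huS : u ∈ A.Gsuf α := ((hPS _).2 (by omega)).resolve_left fun huP => by
      have := (hP _).1 huP
      omega
    have hG : ∀ w ∈ A.Gstar α, rankQ w ≤ hstar := fun w hw => by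
      have := hi_max _ (rankQ_le_card w) fun _ => ⟨w, rfl, hw⟩
      omega
    obtain ⟨v, hvu, hv⟩ := GNFA.exists_epsWalk_rankQ_le hA hW hr hα hG hjo (by omega) huS
    have := GNFA.Amin_le hu hvu
    omega

/-- Let `A` be a Wheeler `r`-GNFA with Wheeler order `≤` and
`α ≠ ε`. With `i*`, `j°` and `h* = max{|G^≺(α)|, i*, j°}` as in the context,
if `h* > |G^≺(α)|`, then `|G^≺_⊣(α)| ≥ h* > |G^≺(α)|`, and `|G^≺_⊣(α)|` is the
smallest `h* ≤ t ≤ |Q|` such that, if `t < |Q|`, then `A_min[t+1] = t+1`. -/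
theorem gprecsuf_card_eq_smallest_t {σ Q : Type*} [Fintype σ] [LinearOrder σ]
    [Fintype Q] [LinearOrder Q] (A : GNFA σ Q)
    (hA : A.Standard) (hW : A.IsWheeler) (r : ℕ) (hr : A.Bounded r)
    (α : List σ) (hα : α ≠ [])
    (istar : ℕ) (hi_le : istar ≤ Fintype.card Q) (hi : A.Icond α istar)
    (hi_max : ∀ i ≤ Fintype.card Q, A.Icond α i → i ≤ istar)
    (jo : ℕ) (hjo_le : jo ≤ Fintype.card Q) (hjo : A.Jcond2 r α jo)
    (hjo_min : ∀ j ≤ Fintype.card Q, A.Jcond2 r α j → jo ≤ j)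
    (hstar : ℕ) (hh : hstar = max (max (A.Gprec α).ncard istar) jo)
    (hgt : (A.Gprec α).ncard < hstar) :
    hstar ≤ (A.GprecSuf α).ncard ∧ (A.Gprec α).ncard < (A.GprecSuf α).ncard ∧
    (A.GprecSuf α).ncard ≤ Fintype.card Q ∧
    ((A.GprecSuf α).ncard < Fintype.card Q →
      A.Amin ((A.GprecSuf α).ncard + 1) = (A.GprecSuf α).ncard + 1) ∧
    ∀ t, hstar ≤ t → t ≤ Fintype.card Q →
      (t < Fintype.card Q → A.Amin (t + 1) = t + 1) →
      (A.GprecSuf α).ncard ≤ t :=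
  gprecsuf_card_eq_smallest_t_general A hA hW r hr α hα istar hi hi_max jo hjo hjo_min hstar hh hgt
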